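/- Let K1 and K2 be two minimal X–Y separators of G. Then K1 ≤ K2 if and only if K1 \ K2 ⊆ NR(G,Y,K2). -/

import Mathlib

variable {V : Type*}

/-- `K` is an `X`–`Y` separator of `G`: `K` avoids `X ∪ Y` and every walk
from a vertex of `X` to a vertex of `Y` meets `K` (i.e. there is no
`X`–`Y` path in `G \ K`). -/
def IsSeparator (G : SimpleGraph V) (X Y K : Set V) : Prop :=
  K ⊆ (X ∪ Y)ᶜ ∧
  ∀ x ∈ X, ∀ y ∈ Y, ∀ w : G.Walk x y, ∃ v ∈ w.support, v ∈ K

/-- `NR G A B`: the vertices of `G \ B` that are not reachable from `A` in `G \ B`. -/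
def NR (G : SimpleGraph V) (A B : Set V) : Set V :=
  {v | v ∉ B ∧ ¬ ∃ a ∈ A, ∃ w : G.Walk a v, ∀ x ∈ w.support, x ∉ B}

/-- `Reach G A B`: the vertices reachable from `A` in `G \ B`. -/
def Reach (G : SimpleGraph V) (A B : Set V) : Set V :=
  {v | ∃ a ∈ A, ∃ w : G.Walk a v, ∀ x ∈ w.support, x ∉ B}

/-- The order on `X`–`Y` separators: `K1 ≤ K2` iff `NR(G,Y,K1) ⊆ NR(G,Y,K2)`. -/
def SepLE (G : SimpleGraph V) (Y K1 K2 : Set V) : Prop :=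
  NR G Y K1 ⊆ NR G Y K2

/-- The strict order on `X`–`Y` separators. -/
def SepLT (G : SimpleGraph V) (Y K1 K2 : Set V) : Prop :=
  NR G Y K1 ⊆ NR G Y K2 ∧ NR G Y K1 ≠ NR G Y K2

/-- A minimal `X`–`Y` separator: no proper subset is an `X`–`Y` separator. -/
def IsMinimalSeparator (G : SimpleGraph V) (X Y K : Set V) : Prop :=
  IsSeparator G X Y K ∧ ∀ K' ⊂ K, ¬ IsSeparator G X Y K'

/-- An important `X`–`Y` separator: a minimal separator `K` such that there is
no separator `K'` with `K < K'` and `|K'| ≤ |K|`. -/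
def IsImportantSeparator (G : SimpleGraph V) (X Y K : Set V) : Prop :=
  IsMinimalSeparator G X Y K ∧
  ¬ ∃ K', IsSeparator G X Y K' ∧ SepLT G Y K K' ∧ K'.ncard ≤ K.ncard

/-- The minimum size of an `X`–`Y` separator of `G`. -/
noncomputable def minSepSize (G : SimpleGraph V) (X Y : Set V) : ℕ :=
  sInf {n | ∃ K, IsSeparator G X Y K ∧ K.ncard = n}

/-- The excess of a separator: its size minus the minimum separator size. -/
noncomputable def excess (G : SimpleGraph V) (X Y K : Set V) : ℕ :=
  K.ncard - minSepSize G X Y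

/-- The graph `Pr(G,X,Y,K)`: the vertices `NR(G,Y,K) \ X` are deleted (here:
made isolated), and every vertex of `X` is made adjacent to every vertex of `K`. -/
def PrGraph (G : SimpleGraph V) (X Y K : Set V) : SimpleGraph V where
  Adj u v := u ≠ v ∧ u ∉ NR G Y K \ X ∧ v ∉ NR G Y K \ X ∧
    (G.Adj u v ∨ (u ∈ X ∧ v ∈ K) ∨ (u ∈ K ∧ v ∈ X))
  symm := by
    refine ⟨?_⟩
    rintro u v ⟨h1, h2, h3, h4⟩
    refine ⟨h1.symm, h3, h2, ?_⟩
    rcases h4 with h | h | h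
    · exact Or.inl h.symm
    · exact Or.inr (Or.inr ⟨h.2, h.1⟩)
    · exact Or.inr (Or.inl ⟨h.2, h.1⟩)
  loopless := by refine ⟨?_⟩; rintro v ⟨h1, -⟩; exact h1 rfl

/-- `NSet G X` is `N(X)`: the set of vertices outside `X` adjacent to a vertex of `X`. -/
def NSet (G : SimpleGraph V) (X : Set V) : Set V :=
  {v | v ∉ X ∧ ∃ x ∈ X, G.Adj x v}

/-- `G` is `X`–`Y` normalized: `N(X)` is an `X`–`Y` separator and is
the unique smallest `X`–`Y` separator. -/
def Normalized (G : SimpleGraph V) (X Y : Set V) : Prop :=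
  IsSeparator G X Y (NSet G X) ∧
  ∀ K, IsSeparator G X Y K → K ≠ NSet G X → (NSet G X).ncard < K.ncard

/-- The cover excess `CE(S)`: the minimum excess of an `X`–`Y` separator disjoint from `S`. -/
noncomputable def CE (G : SimpleGraph V) (X Y S : Set V) : ℕ :=
  sInf {n | ∃ K, IsSeparator G X Y K ∧ Disjoint K S ∧ excess G X Y K = n}

/-- A witness of `S`: an `X`–`Y` separator disjoint from `S` whose excess equals `CE(S)`. -/
noncomputable def IsWitness (G : SimpleGraph V) (X Y S K : Set V) : Prop :=
  IsSeparator G X Y K ∧ Disjoint K S ∧ excess G X Y K = CE G X Y S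

/-- An important witness of `S`: a witness of `S` that is an important `X`–`Y` separator. -/
noncomputable def IsImportantWitness (G : SimpleGraph V) (X Y S K : Set V) : Prop :=
  IsWitness G X Y S K ∧ IsImportantSeparator G X Y K

/-! Two facts drive both directions: a vertex reachable from `X` in `G \ K`, for `K` an `X`–`Y`
separator, lies in `NR(G,Y,K)`; and every vertex `v` of a minimal separator `K` lies on an
`X`–`Y` walk meeting `K` only at `v`. Following a walk through `v` that meets `L` at most at `v`
until it first hits `M ∪ {v}` either reaches `v` avoiding `M`, or reaches a vertex of `M`
avoiding `L`; with `{L, M} = {K1, K2}` each alternative is settled by the first fact or by the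
hypothesis of the direction at hand. -/

namespace SimpleGraph.Walk

lemma exists_prefix_first_mem {G : SimpleGraph V} {a b : V} (w : G.Walk a b) {S : Set V}
    (h : ∃ x ∈ w.support, x ∈ S) :
    ∃ u ∈ S, ∃ p : G.Walk a u, (∀ z ∈ p.support, z ∈ S → z = u) ∧ p.support ⊆ w.support := by
  induction w with
  | nil =>
    obtain ⟨x, hx, hxS⟩ := h
    rw [support_nil, List.mem_singleton] at hx
    subst hx
    exact ⟨x, hxS, nil, by simp, by simp⟩
  | @cons a c b hadj p ih =>
    by_cases haS : a ∈ S
    · exact ⟨a, haS, nil, by simp, by simp⟩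
    obtain ⟨u, huS, q, hq, hqp⟩ := ih (by simpa [haS] using h)
    refine ⟨u, huS, cons hadj q, ?_, ?_⟩
    · simp only [support_cons, List.mem_cons, forall_eq_or_imp]
      exact ⟨fun haS' => absurd haS' haS, hq⟩
    · simpa only [support_cons] using List.cons_subset_cons a hqp

end SimpleGraph.Walk

open SimpleGraph

lemma notMem_of_mem_reach {G : SimpleGraph V} {A B : Set V} {u : V} (hu : u ∈ Reach G A B) :
    u ∉ B := by
  obtain ⟨a, -, w, hw⟩ := hu
  exact hw u w.end_mem_support

lemma IsSeparator.reach_subset_NR {G : SimpleGraph V} {X Y K : Set V}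
    (hK : IsSeparator G X Y K) : Reach G X K ⊆ NR G Y K := by
  rintro u ⟨x, hx, p, hp⟩
  refine ⟨hp u p.end_mem_support, ?_⟩
  rintro ⟨y, hy, q, hq⟩
  obtain ⟨z, hz, hzK⟩ := hK.2 x hx y hy (p.append q.reverse)
  rw [Walk.mem_support_append_iff, Walk.support_reverse, List.mem_reverse] at hz
  exact hz.elim (hp z · hzK) (hq z · hzK)

lemma IsMinimalSeparator.exists_walk_meeting_only_at {G : SimpleGraph V} {X Y K : Set V}
    (hK : IsMinimalSeparator G X Y K) {v : V} (hv : v ∈ K) :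
    ∃ x ∈ X, ∃ y ∈ Y, ∃ P : G.Walk x y, v ∈ P.support ∧ ∀ z ∈ P.support, z ∈ K → z = v := by
  by_contra! h
  refine hK.2 (K \ {v}) (Set.sdiff_singleton_ssubset.2 hv)
    ⟨Set.sdiff_subset.trans hK.1.1, fun x hx y hy P => ?_⟩
  obtain ⟨z, hz, hzK⟩ := hK.1.2 x hx y hy P
  by_cases hzv : z = v
  · exact h x hx y hy P (hzv ▸ hz)
  · exact ⟨z, hz, hzK, hzv⟩

lemma mem_reach_or_exists_mem_reach {G : SimpleGraph V} {A L M : Set V} {a b v : V}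
    (ha : a ∈ A) (P : G.Walk a b) (hvP : v ∈ P.support) (hvM : v ∉ M)
    (hPL : ∀ z ∈ P.support, z ∈ L → z = v) :
    v ∈ Reach G A M ∨ ∃ u ∈ M, u ∈ Reach G A L := by
  obtain ⟨u, hu, Q, hQ, hQP⟩ :=
    P.exists_prefix_first_mem (S := insert v M) ⟨v, hvP, Set.mem_insert v M⟩
  rcases hu with rfl | huM
  · exact Or.inl ⟨a, ha, Q, fun z hz hzM => hvM (hQ z hz (Or.inr hzM) ▸ hzM)⟩
  · refine Or.inr ⟨u, huM, a, ha, Q, fun z hz hzL => ?_⟩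
    obtain rfl := hPL z (hQP hz) hzL
    exact hvM (hQ z hz (Or.inl rfl) ▸ huM)

theorem minimalSeparator_le_iff_diff_subset_NR_general
    {V : Type*} (G : SimpleGraph V) (X Y K1 K2 : Set V)
    (hK1 : IsMinimalSeparator G X Y K1) (hK2 : IsMinimalSeparator G X Y K2) :
    SepLE G Y K1 K2 ↔ K1 \ K2 ⊆ NR G Y K2 := by
  constructor
  · rintro hle v ⟨hv1, hv2⟩
    obtain ⟨x, hx, y, -, P, hvP, hPK1⟩ := hK1.exists_walk_meeting_only_at hv1
    rcases mem_reach_or_exists_mem_reach hx P hvP hv2 hPK1 with hv | ⟨u, hu2, hu⟩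
    · exact hK2.1.reach_subset_NR hv
    · exact absurd hu2 (hle (hK1.1.reach_subset_NR hu)).1
  · rintro hsub v ⟨hv1, hv⟩
    have no_walk : ∀ y ∈ Y, ∀ {b} (P : G.Walk y b), v ∈ P.support →
        (∀ z ∈ P.support, z ∈ K2 → z = v) → False := by
      intro y hy b P hvP hPK2
      rcases mem_reach_or_exists_mem_reach hy P hvP hv1 hPK2 with hv' | ⟨u, hu1, hu⟩
      · exact hv hv'
      · exact (hsub ⟨hu1, notMem_of_mem_reach hu⟩).2 hu
    refine ⟨fun hv2 => ?_, fun ⟨y, hy, W, hW⟩ =>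
      no_walk y hy W W.end_mem_support fun z hz hzK2 => (hW z hz hzK2).elim⟩
    obtain ⟨x, -, y, hy, P, hvP, hPK2⟩ := hK2.exists_walk_meeting_only_at hv2
    exact no_walk y hy P.reverse (by simpa using hvP) (by simpa using hPK2)

/-- Let `K1`, `K2` be two minimal `X`–`Y` separators of `G`.
Then `K1 ≤ K2` if and only if `K1 \ K2 ⊆ NR(G,Y,K2)`. -/
theorem minimalSeparator_le_iff_diff_subset_NR
    {V : Type*} [Fintype V] (G : SimpleGraph V) (X Y K1 K2 : Set V)
    (hXY : Disjoint X Y)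
    (hK1 : IsMinimalSeparator G X Y K1) (hK2 : IsMinimalSeparator G X Y K2) :
    SepLE G Y K1 K2 ↔ K1 \ K2 ⊆ NR G Y K2 :=
  minimalSeparator_le_iff_diff_subset_NR_general G X Y K1 K2 hK1 hK2
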